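/- arXiv:2303.04956 — 2 statements merged into one kernel-verified Lean document; each statement's English description precedes it below -/
import Mathlib

section
/- Fix ε ∈ (0,1] and set λ_t = ε·t^{-3/4} for t ≥ 1. Given a sequence (j_t)_{t≥1} with j_t ∈ {0,1}, define sequences (x_t)_{t≥1} and (α_t)_{t≥1} recursively by: α_t = ∏_{s=1}^{t-1}(1 − x_s) (so α_1 = 1); R¹_{t-1} = max(0, ∑_{s=1}^{t-1} α_s x_s (1 − 2j_s)) and R²_{t-1} = max(0, ∑_{s=1}^{t-1} α_s (λ_s^{-1} x_s − 1)(1 − 2j_s)); and x_t = 0 if (R¹_{t-1}, R²_{t-1}) = (0,0), and x_t = λ_t²·R²_{t-1} / (R¹_{t-1} + λ_t·R²_{t-1}) otherwise. Then for every t ≥ 1: ∑_{s=1}^{t} α_s x_s (1 − 2j_s) ≤ 3ε. -/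
/-!
Blackwell's potential `Φ_t = (R¹_t)² + λ_{t+1}² (R²_t)²`, the squared distance of the cumulative
payoff to the nonpositive orthant in the `λ`-weighted norm, grows by at most `λ_t²` per step:
Blackwell's choice of `x_t` makes the new payoff orthogonal to `(R¹_{t-1}, λ_t² R²_{t-1})`, its
squared weighted norm is `α_t² (x_t² + (λ_t - x_t)²) ≤ λ_t²`, and `λ` is nonincreasing. Hence
`(R¹_t)² ≤ ∑_{s ≤ t} λ_s² = ε² ∑_{s ≤ t} s^{-3/2} ≤ 3ε²`, so `R¹_t ≤ √3 ε`.
-/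

open Finset

theorem sq_max_zero_add_le (u a : ℝ) :
    max 0 (u + a) ^ 2 ≤ max 0 u ^ 2 + 2 * max 0 u * a + a ^ 2 := by
  rcases le_total (u + a) 0 with h | h
  · rw [max_eq_left h]
    nlinarith [sq_nonneg (max 0 u + a)]
  · rw [max_eq_right h]
    nlinarith [le_max_left 0 u, le_max_right 0 u]

theorem sq_max_zero_sum_add_le_sum {u v w c : ℕ → ℝ} (hw_nonneg : ∀ t, 0 ≤ w t)
    (hw_anti : AntitoneOn w (Set.Ici 1))
    (horth_step : ∀ t, max 0 (∑ s ∈ Icc 1 t, u s) * u (t + 1)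
      + w (t + 1) * max 0 (∑ s ∈ Icc 1 t, v s) * v (t + 1) ≤ 0)
    (hsq : ∀ t, u (t + 1) ^ 2 + w (t + 1) * v (t + 1) ^ 2 ≤ c (t + 1)) (t : ℕ) :
    max 0 (∑ s ∈ Icc 1 t, u s) ^ 2 + w (t + 1) * max 0 (∑ s ∈ Icc 1 t, v s) ^ 2
      ≤ ∑ s ∈ Icc 1 t, c s := by
  induction t with
  | zero => simp
  | succ t ih =>
    rw [sum_Icc_succ_top (by omega), sum_Icc_succ_top (by omega), sum_Icc_succ_top (by omega)]
    set A := max 0 (∑ s ∈ Icc 1 t, u s)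
    set B := max 0 (∑ s ∈ Icc 1 t, v s)
    have hw : w (t + 1 + 1) ≤ w (t + 1) :=
      hw_anti (Set.mem_Ici.2 (by omega)) (Set.mem_Ici.2 (by omega)) (by omega)
    calc max 0 (∑ s ∈ Icc 1 t, u s + u (t + 1)) ^ 2
          + w (t + 1 + 1) * max 0 (∑ s ∈ Icc 1 t, v s + v (t + 1)) ^ 2
        ≤ (A ^ 2 + 2 * A * u (t + 1) + u (t + 1) ^ 2)
          + w (t + 1) * (B ^ 2 + 2 * B * v (t + 1) + v (t + 1) ^ 2) := by
          gcongr
          · exact sq_max_zero_add_le _ _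
          · exact hw_nonneg _
          · exact sq_max_zero_add_le _ _
      _ = (A ^ 2 + w (t + 1) * B ^ 2) + 2 * (A * u (t + 1) + w (t + 1) * B * v (t + 1))
          + (u (t + 1) ^ 2 + w (t + 1) * v (t + 1) ^ 2) := by ring
      _ ≤ ∑ s ∈ Icc 1 t, c s + c (t + 1) := by linarith [horth_step t, hsq t]

/-- In the notation of the paper, `x_t = blackwellChoice λ_t R¹_{t-1} R²_{t-1}`. -/
noncomputable def blackwellChoice (l A B : ℝ) : ℝ :=
  if A = 0 ∧ B = 0 then 0 else l ^ 2 * B / (A + l * B)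

section
variable {l A B : ℝ}

theorem blackwellChoice_mem_Icc (hl : 0 < l) (hA : 0 ≤ A) (hB : 0 ≤ B) :
    blackwellChoice l A B ∈ Set.Icc 0 l := by
  unfold blackwellChoice
  split_ifs with h
  · exact ⟨le_rfl, hl.le⟩
  rcases hB.eq_or_lt with rfl | hB
  · simp [hl.le]
  · exact ⟨by positivity, (div_le_iff₀ (by positivity)).2 (by nlinarith)⟩

theorem add_mul_blackwellChoice (hl : 0 < l) (hA : 0 ≤ A) (hB : 0 ≤ B) :
    (A + l * B) * blackwellChoice l A B = l ^ 2 * B := by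
  unfold blackwellChoice
  split_ifs with h
  · simp [h.1, h.2]
  · have : A + l * B ≠ 0 := by
      contrapose! h
      constructor <;> nlinarith [mul_nonneg hl.le hB]
    field_simp

end

theorem sq_max_zero_sum_le_sum_sq_of_blackwellChoice {lam a x : ℕ → ℝ}
    (hlam_pos : ∀ t, 1 ≤ t → 0 < lam t) (hlam_anti : AntitoneOn lam (Set.Ici 1))
    (ha : ∀ t, |a t| ≤ 1)
    (hx : ∀ t, 1 ≤ t → x t = blackwellChoice (lam t)
      (max 0 (∑ s ∈ Icc 1 (t - 1), a s * x s))
      (max 0 (∑ s ∈ Icc 1 (t - 1), a s * ((lam s)⁻¹ * x s - 1)))) (t : ℕ) :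
    max 0 (∑ s ∈ Icc 1 t, a s * x s) ^ 2 ≤ ∑ s ∈ Icc 1 t, lam s ^ 2 := by
  have hw_anti : AntitoneOn (fun s => lam s ^ 2) (Set.Ici 1) := fun s hs r hr hsr =>
    pow_le_pow_left₀ (hlam_pos r hr).le (hlam_anti hs hr hsr) 2
  refine le_trans (le_add_of_nonneg_right ?_) (sq_max_zero_sum_add_le_sum
    (v := fun s => a s * ((lam s)⁻¹ * x s - 1)) (fun _ => sq_nonneg _) hw_anti ?_ ?_ t)
  · positivity
  · intro t
    have hl := hlam_pos (t + 1) (by omega)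
    have horth := add_mul_blackwellChoice hl
      (le_max_left 0 (∑ s ∈ Icc 1 t, a s * x s))
      (le_max_left 0 (∑ s ∈ Icc 1 t, a s * ((lam s)⁻¹ * x s - 1)))
    have hxt := hx (t + 1) (by omega)
    rw [Nat.add_sub_cancel] at hxt
    rw [← hxt] at horth
    set A := max 0 (∑ s ∈ Icc 1 t, a s * x s)
    set B := max 0 (∑ s ∈ Icc 1 t, a s * ((lam s)⁻¹ * x s - 1))
    -- the left side is `a (t + 1) * ((A + lam (t + 1) * B) * x (t + 1) - lam (t + 1) ^ 2 * B)`
    apply le_of_eq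
    linear_combination a (t + 1) * horth
      + lam (t + 1) * B * a (t + 1) * x (t + 1) * mul_inv_cancel₀ hl.ne'
  · intro t
    have hl := hlam_pos (t + 1) (by omega)
    obtain ⟨hx0, hxl⟩ : x (t + 1) ∈ Set.Icc 0 (lam (t + 1)) := by
      rw [hx (t + 1) (by omega)]
      exact blackwellChoice_mem_Icc hl (le_max_left _ _) (le_max_left _ _)
    have ha2 : a (t + 1) ^ 2 ≤ 1 := sq_le_one_iff_abs_le_one _ |>.2 (ha _)
    have hgap : 0 ≤ x (t + 1) * (lam (t + 1) - x (t + 1)) := mul_nonneg hx0 (by linarith)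
    calc (a (t + 1) * x (t + 1)) ^ 2
          + lam (t + 1) ^ 2 * (a (t + 1) * ((lam (t + 1))⁻¹ * x (t + 1) - 1)) ^ 2
        = a (t + 1) ^ 2 * (x (t + 1) ^ 2 + (lam (t + 1) - x (t + 1)) ^ 2) := by
          field_simp
          ring
      _ ≤ x (t + 1) ^ 2 + (lam (t + 1) - x (t + 1)) ^ 2 :=
          mul_le_of_le_one_left (by positivity) ha2
      _ ≤ lam (t + 1) ^ 2 := by nlinarith

theorem abs_prod_one_sub_le_one {s : Finset ℕ} {x : ℕ → ℝ} (hx : ∀ i ∈ s, x i ∈ Set.Icc 0 1) :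
    |∏ i ∈ s, (1 - x i)| ≤ 1 := by
  rw [abs_prod]
  refine prod_le_one (fun _ _ => abs_nonneg _) fun i hi => abs_le.2 ⟨?_, ?_⟩ <;>
    linarith [(hx i hi).1, (hx i hi).2]

theorem rpow_neg_three_halves_le_sub {x : ℝ} (hx : 0 < x) :
    (x + 1) ^ (-(3 : ℝ) / 2) ≤ 2 * x ^ (-(1 : ℝ) / 2) - 2 * (x + 1) ^ (-(1 : ℝ) / 2) := by
  have hx1 : 0 < x + 1 := by linarith
  set a := x ^ (-(1 : ℝ) / 2)
  set b := (x + 1) ^ (-(1 : ℝ) / 2)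
  have hb : 0 < b := Real.rpow_pos_of_pos hx1 _
  have hba : b ≤ a := Real.rpow_le_rpow_of_nonpos hx (by linarith) (by norm_num)
  have hb3 : (x + 1) ^ (-(3 : ℝ) / 2) = b ^ 3 := by
    rw [← Real.rpow_mul_natCast hx1.le]; norm_num
  have ha2 : a ^ 2 * x = 1 := by
    rw [← Real.rpow_mul_natCast hx.le, ← Real.rpow_add_one hx.ne']; norm_num
  have hb2 : b ^ 2 * (x + 1) = 1 := by
    rw [← Real.rpow_mul_natCast hx1.le, ← Real.rpow_add_one hx1.ne']; norm_num
  -- `a² - b² = a²b²`, hence `2a(a - b) ≥ a²b² ≥ ab³`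
  have hdiff : (a - b) * (a + b) = a ^ 2 * b ^ 2 := by linear_combination b ^ 2 * ha2 - a ^ 2 * hb2
  rw [hb3]
  nlinarith [mul_le_mul_of_nonneg_left hba (by positivity : (0 : ℝ) ≤ a * b ^ 2)]

theorem sum_Icc_rpow_neg_three_halves_le_sub {t : ℕ} (ht : 1 ≤ t) :
    ∑ s ∈ Icc 1 t, (s : ℝ) ^ (-(3 : ℝ) / 2) ≤ 3 - 2 * (t : ℝ) ^ (-(1 : ℝ) / 2) := by
  induction t, ht using Nat.le_induction with
  | base => norm_num
  | succ n hn ih =>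
    rw [sum_Icc_succ_top (by omega), Nat.cast_succ]
    linarith [rpow_neg_three_halves_le_sub (x := n) (by exact_mod_cast hn)]

theorem sum_Icc_rpow_neg_three_halves_le (t : ℕ) :
    ∑ s ∈ Icc 1 t, (s : ℝ) ^ (-(3 : ℝ) / 2) ≤ 3 := by
  rcases Nat.eq_zero_or_pos t with rfl | ht
  · norm_num
  · linarith [sum_Icc_rpow_neg_three_halves_le_sub ht,
      Real.rpow_nonneg (Nat.cast_nonneg t) (-(1 : ℝ) / 2)]

theorem mul_natCast_rpow_mem_Ioc {ε r : ℝ} (hε : ε ∈ Set.Ioc 0 1) (hr : r ≤ 0) {t : ℕ}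
    (ht : 1 ≤ t) : ε * (t : ℝ) ^ r ∈ Set.Ioc 0 1 := by
  have ht' : (1 : ℝ) ≤ t := by exact_mod_cast ht
  exact ⟨mul_pos hε.1 (Real.rpow_pos_of_pos (by linarith) r),
    mul_le_one₀ hε.2 (by positivity) (Real.rpow_le_one_of_one_le_of_nonpos ht' hr)⟩

theorem antitoneOn_mul_natCast_rpow {ε r : ℝ} (hε : 0 ≤ ε) (hr : r ≤ 0) :
    AntitoneOn (fun t : ℕ => ε * (t : ℝ) ^ r) (Set.Ici 1) := fun s hs _ _ hst => by
  have hs' : (0 : ℝ) < s := by exact_mod_cast hs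
  exact mul_le_mul_of_nonneg_left
    (Real.rpow_le_rpow_of_nonpos hs' (by exact_mod_cast hst) hr) hε

theorem sum_Icc_sq_le_of_eq_mul_rpow {ε : ℝ} {lam : ℕ → ℝ}
    (hlam : ∀ t, 1 ≤ t → lam t = ε * (t : ℝ) ^ (-(3 : ℝ) / 4)) (t : ℕ) :
    ∑ s ∈ Icc 1 t, lam s ^ 2 ≤ 3 * ε ^ 2 := by
  have hsq : ∀ s ∈ Icc 1 t, lam s ^ 2 = ε ^ 2 * (s : ℝ) ^ (-(3 : ℝ) / 2) := fun s hs => by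
    rw [hlam s (mem_Icc.1 hs).1, mul_pow, ← Real.rpow_mul_natCast (Nat.cast_nonneg s)]
    norm_num
  rw [sum_congr rfl hsq, ← mul_sum, mul_comm]
  exact mul_le_mul_of_nonneg_right (sum_Icc_rpow_neg_three_halves_le t) (sq_nonneg ε)

/-- Cumulative first-component bound for Blackwell's algorithm in the auxiliary approachability problem of the Big Match: `∑_{s=1}^t α_s x_s (1 − 2j_s) ≤ 3ε` for every `t ≥ 1`. -/
theorem big_match_first_component_bound
    (ε : ℝ) (hε : ε ∈ Set.Ioc (0 : ℝ) 1)
    (lam : ℕ → ℝ) (hlam : ∀ t : ℕ, 1 ≤ t → lam t = ε * (t : ℝ) ^ (-(3 : ℝ) / 4))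
    (j : ℕ → ℝ) (hj : ∀ t, j t = 0 ∨ j t = 1)
    (x α : ℕ → ℝ)
    (hα : ∀ t, α t = ∏ s ∈ Finset.Icc 1 (t - 1), (1 - x s))
    (R1 R2 : ℕ → ℝ)
    (hR1 : ∀ t, R1 t = max 0 (∑ s ∈ Finset.Icc 1 t, α s * x s * (1 - 2 * j s)))
    (hR2 : ∀ t, R2 t =
      max 0 (∑ s ∈ Finset.Icc 1 t, α s * ((lam s)⁻¹ * x s - 1) * (1 - 2 * j s)))
    (hx : ∀ t : ℕ, 1 ≤ t →
      x t = if R1 (t - 1) = 0 ∧ R2 (t - 1) = 0 then 0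
        else lam t ^ 2 * R2 (t - 1) / (R1 (t - 1) + lam t * R2 (t - 1))) :
    ∀ t : ℕ, 1 ≤ t →
      ∑ s ∈ Finset.Icc 1 t, α s * x s * (1 - 2 * j s) ≤ 3 * ε := by
  have hlam_mem : ∀ t, 1 ≤ t → lam t ∈ Set.Ioc 0 1 := fun t ht =>
    hlam t ht ▸ mul_natCast_rpow_mem_Ioc hε (by norm_num) ht
  have hlam_anti : AntitoneOn lam (Set.Ici 1) :=
    (antitoneOn_mul_natCast_rpow hε.1.le (by norm_num)).congr fun t ht => (hlam t ht).symm
  have hx' : ∀ t, 1 ≤ t → x t = blackwellChoice (lam t)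
      (max 0 (∑ s ∈ Icc 1 (t - 1), α s * (1 - 2 * j s) * x s))
      (max 0 (∑ s ∈ Icc 1 (t - 1), α s * (1 - 2 * j s) * ((lam s)⁻¹ * x s - 1))) := by
    simp only [mul_right_comm _ (1 - 2 * j _), ← hR1, ← hR2]
    exact hx
  have hα_abs : ∀ t, |α t * (1 - 2 * j t)| ≤ 1 := fun t => by
    have hσ : |1 - 2 * j t| = 1 := by rcases hj t with h | h <;> norm_num [h]
    rw [abs_mul, hσ, mul_one, hα t]
    refine abs_prod_one_sub_le_one fun s hs => ?_
    have hs1 := (mem_Icc.1 hs).1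
    obtain ⟨h0, hl⟩ := hx' s hs1 ▸
      blackwellChoice_mem_Icc (hlam_mem s hs1).1 (le_max_left _ _) (le_max_left _ _)
    exact ⟨h0, hl.trans (hlam_mem s hs1).2⟩
  intro t _
  have hsq := (sq_max_zero_sum_le_sum_sq_of_blackwellChoice (fun s hs => (hlam_mem s hs).1)
    hlam_anti hα_abs hx' t).trans (sum_Icc_sq_le_of_eq_mul_rpow hlam t)
  simp only [mul_right_comm _ (1 - 2 * j _)] at hsq
  calc ∑ s ∈ Icc 1 t, α s * x s * (1 - 2 * j s)
      ≤ max 0 (∑ s ∈ Icc 1 t, α s * x s * (1 - 2 * j s)) := le_max_right _ _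
    _ ≤ 3 * ε := by nlinarith [le_max_left 0 (∑ s ∈ Icc 1 t, α s * x s * (1 - 2 * j s)), hε.1]
end

section
/- Fix ε ∈ (0,1] and set λ_t = ε·t^{-3/4} for t ≥ 1. Given a sequence (j_t)_{t≥1} with j_t ∈ {0,1}, define sequences (x_t)_{t≥1} and (α_t)_{t≥1} recursively by: α_t = ∏_{s=1}^{t-1}(1 − x_s) (so α_1 = 1); R¹_{t-1} = max(0, ∑_{s=1}^{t-1} α_s x_s (1 − 2j_s)) and R²_{t-1} = max(0, ∑_{s=1}^{t-1} α_s (λ_s^{-1} x_s − 1)(1 − 2j_s)); and x_t = 0 if (R¹_{t-1}, R²_{t-1}) = (0,0), and x_t = λ_t²·R²_{t-1} / (R¹_{t-1} + λ_t·R²_{t-1}) otherwise. For t ≥ 1 let r_t = α_t(1−2j_t)·(x_t, λ_t^{-1}x_t − 1) ∈ ℝ² and ‖u‖_(t)² = (u^(1))² + λ_t²·(u^(2))². Then for every t ≥ 1: ∑_{s=1}^t ‖r_s‖_(s)² ≤ 9ε². -/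
/-!
Since `λ_t² R² ≤ λ_t (R¹ + λ_t R²)` for `R¹, R² ≥ 0`, every step `x_t` lies in `[0, λ_t]`, so with
`λ_t ≤ 1` every weight `α_t` lies in `[0, 1]`. Both `x_s` and `λ_s (λ_s⁻¹ x_s - 1) = x_s - λ_s`
then have modulus at most `λ_s`, giving `‖r_s‖_(s)² ≤ 2λ_s² = 2ε² s^{-3/2}`. Comparing `∑ s^{-3/2}`
with `1 + ∫₁^∞ x^{-3/2} dx = 3` bounds the total by `6ε² ≤ 9ε²`.
-/

open Finset

theorem sum_Icc_rpow_neg_le {r : ℝ} (hr : 1 < r) (t : ℕ) :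
    ∑ s ∈ Icc 1 t, (s : ℝ) ^ (-r) ≤ r / (r - 1) := by
  have hr' : 0 < r - 1 := sub_pos.mpr hr
  rcases Nat.eq_zero_or_pos t with rfl | ht
  · simp only [Icc_eq_empty_of_lt zero_lt_one, sum_empty]
    positivity
  have ht1 : (1 : ℝ) ≤ t := Nat.one_le_cast.mpr ht
  have hanti : AntitoneOn (fun x : ℝ => x ^ (-r)) (Set.Icc (1 : ℕ) t) := fun a ha b _ hab =>
    Real.rpow_le_rpow_of_nonpos (by simp at ha; linarith [ha.1]) hab (by linarith)
  have hint : ∫ x in (1 : ℕ)..(t : ℝ), x ^ (-r) = (1 - (t : ℝ) ^ (1 - r)) / (r - 1) := by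
    rw [integral_rpow (Or.inr ⟨by linarith, by simp [Set.mem_uIcc]; omega⟩),
      show -r + 1 = -(r - 1) by ring, show 1 - r = -(r - 1) by ring]
    simp only [Nat.cast_one, Real.one_rpow]
    rw [div_neg, ← neg_div]
    ring_nf
  have hsplit : ∑ s ∈ Icc 1 t, (s : ℝ) ^ (-r) = 1 + ∑ i ∈ Ico 1 t, ((i + 1 : ℕ) : ℝ) ^ (-r) := by
    rw [← Ico_add_one_right_eq_Icc, sum_eq_sum_Ico_succ_bot (by omega),
      sum_Ico_add' (fun i : ℕ => (i : ℝ) ^ (-r))]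
    simp
  have htail_nonneg : 0 ≤ (t : ℝ) ^ (1 - r) := by positivity
  rw [hsplit]
  calc _ ≤ 1 + (1 - (t : ℝ) ^ (1 - r)) / (r - 1) := by
        gcongr
        rw [← hint]
        exact hanti.sum_le_integral_Ico ht
    _ ≤ 1 + 1 / (r - 1) := by gcongr; linarith
    _ = r / (r - 1) := by field_simp; ring

theorem prod_one_sub_mem_Icc {ι : Type*} (S : Finset ι) (f : ι → ℝ)
    (hf : ∀ i ∈ S, f i ∈ Set.Icc (0 : ℝ) 1) : ∏ i ∈ S, (1 - f i) ∈ Set.Icc (0 : ℝ) 1 :=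
  ⟨prod_nonneg fun i hi => sub_nonneg.mpr (hf i hi).2,
    prod_le_one (fun i hi => sub_nonneg.mpr (hf i hi).2) fun i hi => by linarith [(hf i hi).1]⟩

theorem ite_div_mem_Icc {l R₁ R₂ : ℝ} (hl : 0 ≤ l) (h₁ : 0 ≤ R₁) (h₂ : 0 ≤ R₂)
    (p : Prop) [Decidable p] :
    (if p then 0 else l ^ 2 * R₂ / (R₁ + l * R₂)) ∈ Set.Icc 0 l := by
  split_ifs
  · exact ⟨le_rfl, hl⟩
  · refine ⟨by positivity, div_le_of_le_mul₀ (by positivity) hl ?_⟩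
    nlinarith [mul_nonneg hl h₁]

theorem sq_add_sq_mul_inv_sub_one_le {a σ x l : ℝ} (ha : a ∈ Set.Icc (0 : ℝ) 1)
    (hσ : σ ^ 2 = 1) (hl : 0 < l) (hx : x ∈ Set.Icc 0 l) :
    (a * σ * x) ^ 2 + l ^ 2 * (a * σ * (l⁻¹ * x - 1)) ^ 2 ≤ 2 * l ^ 2 := by
  obtain ⟨ha0, ha1⟩ := ha
  obtain ⟨hx0, hxl⟩ := hx
  have hscale : l * (l⁻¹ * x - 1) = x - l := by field_simp
  have ha_sq : a ^ 2 ≤ 1 := by nlinarith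
  have hx_sq : x ^ 2 ≤ l ^ 2 := by nlinarith
  have hxl_sq : (x - l) ^ 2 ≤ l ^ 2 := by nlinarith
  calc (a * σ * x) ^ 2 + l ^ 2 * (a * σ * (l⁻¹ * x - 1)) ^ 2
      = a ^ 2 * σ ^ 2 * (x ^ 2 + (l * (l⁻¹ * x - 1)) ^ 2) := by ring
    _ = a ^ 2 * (x ^ 2 + (x - l) ^ 2) := by rw [hσ, hscale, mul_one]
    _ ≤ 1 * (l ^ 2 + l ^ 2) :=
        mul_le_mul ha_sq (add_le_add hx_sq hxl_sq) (by positivity) zero_le_one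
    _ = 2 * l ^ 2 := by ring

theorem mul_rpow_neg_three_fourths_sq (ε : ℝ) {s : ℝ} (hs : 0 ≤ s) :
    (ε * s ^ (-(3 : ℝ) / 4)) ^ 2 = ε ^ 2 * s ^ (-(3 / 2 : ℝ)) := by
  rw [mul_pow, ← Real.rpow_mul_natCast hs]
  norm_num

/-- Bound on the cumulative squared norms of the outcome vectors `r_t = α_t(1−2j_t)·(x_t, λ_t⁻¹x_t − 1)` for the time-dependent norms `‖u‖_(t)² = (u¹)² + λ_t²(u²)²`: `∑_{s=1}^t ‖r_s‖_(s)² ≤ 9ε²`. -/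
theorem big_match_outcome_norms_bound
    (ε : ℝ) (hε : ε ∈ Set.Ioc (0 : ℝ) 1)
    (lam : ℕ → ℝ) (hlam : ∀ t : ℕ, 1 ≤ t → lam t = ε * (t : ℝ) ^ (-(3 : ℝ) / 4))
    (j : ℕ → ℝ) (hj : ∀ t, j t = 0 ∨ j t = 1)
    (x α : ℕ → ℝ)
    (hα : ∀ t, α t = ∏ s ∈ Finset.Icc 1 (t - 1), (1 - x s))
    (R1 R2 : ℕ → ℝ)
    (hR1 : ∀ t, R1 t = max 0 (∑ s ∈ Finset.Icc 1 t, α s * x s * (1 - 2 * j s)))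
    (hR2 : ∀ t, R2 t =
      max 0 (∑ s ∈ Finset.Icc 1 t, α s * ((lam s)⁻¹ * x s - 1) * (1 - 2 * j s)))
    (hx : ∀ t : ℕ, 1 ≤ t →
      x t = if R1 (t - 1) = 0 ∧ R2 (t - 1) = 0 then 0
        else lam t ^ 2 * R2 (t - 1) / (R1 (t - 1) + lam t * R2 (t - 1))) :
    ∀ t : ℕ, 1 ≤ t →
      ∑ s ∈ Finset.Icc 1 t,
          ((α s * (1 - 2 * j s) * x s) ^ 2 +
            lam s ^ 2 * (α s * (1 - 2 * j s) * ((lam s)⁻¹ * x s - 1)) ^ 2) ≤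
        9 * ε ^ 2 := by
  intro t _
  obtain ⟨hε0, hε1⟩ := hε
  have hlam_pos : ∀ s, 1 ≤ s → 0 < lam s := fun s hs => by rw [hlam s hs]; positivity
  have hlam_le_one : ∀ s, 1 ≤ s → lam s ≤ 1 := fun s hs => by
    rw [hlam s hs]
    exact mul_le_one₀ hε1 (by positivity)
      (Real.rpow_le_one_of_one_le_of_nonpos (Nat.one_le_cast.mpr hs) (by norm_num))
  have hx_mem : ∀ s, 1 ≤ s → x s ∈ Set.Icc 0 (lam s) := fun s hs =>
    hx s hs ▸ ite_div_mem_Icc (hlam_pos s hs).le (hR1 _ ▸ le_max_left _ _)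
      (hR2 _ ▸ le_max_left _ _) _
  have hα_mem : ∀ s, α s ∈ Set.Icc (0 : ℝ) 1 := fun s =>
    hα s ▸ prod_one_sub_mem_Icc _ _ fun u hu =>
      have hu1 : 1 ≤ u := (mem_Icc.mp hu).1
      ⟨(hx_mem u hu1).1, (hx_mem u hu1).2.trans (hlam_le_one u hu1)⟩
  calc _ ≤ ∑ s ∈ Icc 1 t, 2 * ε ^ 2 * (s : ℝ) ^ (-(3 / 2 : ℝ)) := by
        refine sum_le_sum fun s hs => ?_
        have hs1 : 1 ≤ s := (mem_Icc.mp hs).1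
        have hsign : (1 - 2 * j s) ^ 2 = 1 := by rcases hj s with h | h <;> rw [h] <;> norm_num
        refine (sq_add_sq_mul_inv_sub_one_le (hα_mem s) hsign (hlam_pos s hs1)
          (hx_mem s hs1)).trans_eq ?_
        rw [hlam s hs1, mul_rpow_neg_three_fourths_sq ε (Nat.cast_nonneg s)]
        ring
    _ = 2 * ε ^ 2 * ∑ s ∈ Icc 1 t, (s : ℝ) ^ (-(3 / 2 : ℝ)) := (mul_sum _ _ _).symm
    _ ≤ 2 * ε ^ 2 * 3 := by
        gcongr
        exact (sum_Icc_rpow_neg_le (by norm_num) t).trans_eq (by norm_num)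
    _ ≤ 9 * ε ^ 2 := by nlinarith [sq_nonneg ε]
end
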